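/- Rely-guarantee induction principle over traces: let φ(u) be a property of time points, ψ(i,u) a per-thread guarantee, and ι(i) a thread classifier. Suppose (1) φ(u_i) holds at the initial time u_i; (2) for every thread i and time u > u_i, if ι(i) holds and φ(u') holds for all u' with u_i ≤ u' < u, then ψ(i,u) holds; and (3) whenever φ(u1) holds, φ(u2) fails, and u1 < u2, there exist a thread i and time u3 with u1 < u3 ≤ u2 such that ι(i), ¬ψ(i,u3), and φ(u4) for all u4 ∈ (u1, u3). Then φ(u) holds for all u ≥ u_i. -/

import Mathlib

/-! No induction is needed: applying (3) to `u_i` and a putative failure `u` yields a violating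
thread at some `u₃ ∈ (u_i, u]` before which φ holds on all of `[u_i, u₃)`, so (2) forces the
guarantee at `u₃` after all. -/

theorem stmt_11 {Thread : Type} (φ : ℕ → Prop) (ψ : Thread → ℕ → Prop)
    (ι : Thread → Prop) (ui : ℕ)
    (h1 : φ ui)
    (h2 : ∀ (i : Thread) (u : ℕ), u > ui → ι i →
      (∀ u', ui ≤ u' → u' < u → φ u') → ψ i u)
    (h3 : ∀ u1 u2, φ u1 → ¬ φ u2 → u1 < u2 →
      ∃ (i : Thread) (u3 : ℕ), u1 < u3 ∧ u3 ≤ u2 ∧ ι i ∧ ¬ ψ i u3 ∧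
        ∀ u4, u1 < u4 → u4 < u3 → φ u4) :
    ∀ u, ui ≤ u → φ u := by
  intro u hui_u
  by_contra hu
  have hui_lt_u : ui < u := hui_u.lt_of_ne (by rintro rfl; exact hu h1)
  obtain ⟨i, u3, hui_u3, -, hι, hψ, hbetween⟩ := h3 ui u h1 hu hui_lt_u
  refine hψ (h2 i u3 hui_u3 hι fun u' hui_u' hu'_u3 => ?_)
  rcases hui_u'.eq_or_lt with rfl | hui_lt_u'
  · exact h1
  · exact hbetween u' hui_lt_u' hu'_u3
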